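/- Let $0 \to A_i \to B_i \to C_i \to 0$ ($i = 1,2,3$) and $0 \to X_1 \to X_2 \to X_3 \to 0$ (for $X \in \{A,B,C\}$) form a commutative $3\times 3$ diagram of finite free modules over a commutative ring $R$ with all rows and columns exact. Then the two natural composite isomorphisms $\bigwedge^{top} B_2 \to \bigwedge^{top} A_1 \otimes \bigwedge^{top} A_3 \otimes \bigwedge^{top} C_1 \otimes \bigwedge^{top} C_3$, obtained by first splitting along the row ($B_2 \simeq A_2 \otimes C_2$, then splitting $A_2$ and $C_2$ along columns) or first along the column ($B_2 \simeq B_1 \otimes B_3$, then splitting $B_1, B_3$ along rows), agree up to the Koszul sign coming from the commutativity constraint transposing $\bigwedge^{top} A_3$ and $\bigwedge^{top} C_1$ (sign $(-1)^{\mathrm{rk} A_3 \cdot \mathrm{rk} C_1}$). -/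

import Mathlib

open TensorProduct

/-- `Φ` is "the" determinant isomorphism `⋀^{r₁}P₁ ⊗ ⋀^{r₃}P₃ ≅ ⋀^{n}P₂` (`n = r₁+r₃`)
attached to a short exact sequence `P₁ →f P₂ →g P₃`: it sends
`(x₁∧⋯∧x_{r₁}) ⊗ (y₁∧⋯∧y_{r₃})` to `f(x₁)∧⋯∧f(x_{r₁})∧ỹ₁∧⋯∧ỹ_{r₃}` for any lifts `ỹᵢ`
of the `yᵢ` along `g`. -/
def IsDetIso (R : Type*) [CommRing R] (P₁ P₂ P₃ : Type*)
    [AddCommGroup P₁] [Module R P₁] [AddCommGroup P₂] [Module R P₂]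
    [AddCommGroup P₃] [Module R P₃] (r₁ r₃ n : ℕ) (hn : n = r₁ + r₃)
    (f : P₁ →ₗ[R] P₂) (g : P₂ →ₗ[R] P₃)
    (Φ : ((⋀[R]^r₁ P₁) ⊗[R] (⋀[R]^r₃ P₃)) ≃ₗ[R] ⋀[R]^n P₂) : Prop :=
  ∀ (x : Fin r₁ → P₁) (y : Fin r₃ → P₃) (ylift : Fin r₃ → P₂),
    (∀ i, g (ylift i) = y i) →
    ∀ (u : ⋀[R]^r₁ P₁) (v : ⋀[R]^r₃ P₃) (w : ⋀[R]^n P₂),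
      (u : ExteriorAlgebra R P₁) = ExteriorAlgebra.ιMulti R r₁ x →
      (v : ExteriorAlgebra R P₃) = ExteriorAlgebra.ιMulti R r₃ y →
      (w : ExteriorAlgebra R P₂)
        = ExteriorAlgebra.ιMulti R n (Fin.append (f ∘ x) ylift ∘ Fin.cast hn) →
      Φ (u ⊗ₜ[R] v) = w

/-!
Both composites can be evaluated on pure tensors of pure wedges `x ∈ ⋀A₁`, `c ∈ ⋀C₁`,
`a ∈ ⋀A₃`, `d ∈ ⋀C₃`, which span the source. Lift `c` to `B₁`, `a` to `A₂` and `d` to `B₂`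
(through `B₃`). Unwinding the defining property of the determinant isomorphisms, and using
commutativity of the diagram to identify the images of the lifts in `B₂`, both composites send
the tensor to a product in `⋀B₂` of the same four wedges `X, C, A, D` (degrees `a₁, c₁, a₃, c₃`):
the row-first one to `(X C)(A D)`, the column-first one to `(X A)(C D)`. Graded commutativity of
the exterior algebra gives `C A = (-1)^(c₁ a₃) A C`.
-/

theorem Fin.comp_append {α β : Type*} (f : α → β) {m n : ℕ} (u : Fin m → α) (v : Fin n → α) :
    f ∘ Fin.append u v = Fin.append (f ∘ u) (f ∘ v) := by
  funext i
  induction i using Fin.addCases <;> simp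

namespace ExteriorAlgebra

variable {R M : Type*} [CommRing R] [AddCommGroup M] [Module R M]

theorem ι_mul_ιMulti_comm (x : M) :
    ∀ (q : ℕ) (v : Fin q → M), ι R x * ιMulti R q v = (-1 : R) ^ q • (ιMulti R q v * ι R x)
  | 0, v => by simp
  | q + 1, v => by
    rw [ιMulti_succ_apply, ← mul_assoc, eq_neg_of_add_eq_zero_left (ι_add_mul_swap x (v 0)),
      neg_mul, mul_assoc, ι_mul_ιMulti_comm x q, mul_smul_comm, ← neg_smul, ← mul_assoc, pow_succ,
      mul_neg_one]

theorem ιMulti_mul_ιMulti_comm :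
    ∀ (p : ℕ) (u : Fin p → M) (q : ℕ) (v : Fin q → M),
      ιMulti R p u * ιMulti R q v = (-1 : R) ^ (p * q) • (ιMulti R q v * ιMulti R p u)
  | 0, u, q, v => by simp
  | p + 1, u, q, v => by
    rw [ιMulti_succ_apply, mul_assoc, ιMulti_mul_ιMulti_comm p _ q v, mul_smul_comm,
      ← mul_assoc, ι_mul_ιMulti_comm, smul_mul_assoc, smul_smul, ← pow_add, mul_assoc,
      Nat.succ_mul]

theorem ιMulti_mul_mul_mul_comm {p q r s : ℕ} (t : Fin p → M) (u : Fin q → M)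
    (v : Fin r → M) (w : Fin s → M) :
    ιMulti R p t * ιMulti R q u * (ιMulti R r v * ιMulti R s w)
      = (-1 : R) ^ (r * q) • (ιMulti R p t * ιMulti R r v * (ιMulti R q u * ιMulti R s w)) := by
  rw [mul_assoc, ← mul_assoc (ιMulti R q u), ιMulti_mul_ιMulti_comm q u r v, Nat.mul_comm,
    smul_mul_assoc, mul_smul_comm, ← mul_assoc, ← mul_assoc, ← mul_assoc]

theorem ιMulti_append_comp_cast {p q n : ℕ} (h : n = p + q) (u : Fin p → M) (v : Fin q → M) :
    ιMulti R n (Fin.append u v ∘ Fin.cast h) = ιMulti R p u * ιMulti R q v := by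
  subst h
  rw [Fin.cast_refl, Function.comp_id, ιMulti_mul_ιMulti]

end ExteriorAlgebra

theorem TensorProduct.span_image2_tmul_eq_top {R M N : Type*} [CommSemiring R]
    [AddCommMonoid M] [Module R M] [AddCommMonoid N] [Module R N] {s : Set M} {t : Set N}
    (hs : Submodule.span R s = ⊤) (ht : Submodule.span R t = ⊤) :
    Submodule.span R (Set.image2 (· ⊗ₜ[R] ·) s t) = ⊤ := by
  have h := Submodule.map₂_span_span R (TensorProduct.mk R M N) s t
  rwa [hs, ht, TensorProduct.map₂_mk_top_top_eq_top, eq_comm] at h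

theorem exteriorPower.ext_fourfold' {R M N P Q X : Type*} [CommRing R]
    [AddCommGroup M] [Module R M] [AddCommGroup N] [Module R N] [AddCommGroup P] [Module R P]
    [AddCommGroup Q] [Module R Q] [AddCommGroup X] [Module R X] {a b c d : ℕ}
    {φ ψ : ((⋀[R]^a M) ⊗[R] (⋀[R]^b N)) ⊗[R] ((⋀[R]^c P) ⊗[R] (⋀[R]^d Q)) →ₗ[R] X}
    (h : ∀ x y z w,
      φ ((ιMulti R a x ⊗ₜ ιMulti R b y) ⊗ₜ (ιMulti R c z ⊗ₜ ιMulti R d w))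
        = ψ ((ιMulti R a x ⊗ₜ ιMulti R b y) ⊗ₜ (ιMulti R c z ⊗ₜ ιMulti R d w))) :
    φ = ψ := by
  refine LinearMap.ext_on (span_image2_tmul_eq_top
    (span_image2_tmul_eq_top (ιMulti_span R a M) (ιMulti_span R b N))
    (span_image2_tmul_eq_top (ιMulti_span R c P) (ιMulti_span R d Q))) ?_
  rintro _ ⟨_, ⟨_, ⟨x, rfl⟩, _, ⟨y, rfl⟩, rfl⟩, _, ⟨_, ⟨z, rfl⟩, _, ⟨w, rfl⟩, rfl⟩, rfl⟩
  exact h x y z w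

namespace IsDetIso

open ExteriorAlgebra

variable {R P₁ P₂ P₃ : Type*} [CommRing R] [AddCommGroup P₁] [Module R P₁]
  [AddCommGroup P₂] [Module R P₂] [AddCommGroup P₃] [Module R P₃] {r₁ r₃ n : ℕ}
  {hn : n = r₁ + r₃} {f : P₁ →ₗ[R] P₂} {g : P₂ →ₗ[R] P₃}
  {Φ : ((⋀[R]^r₁ P₁) ⊗[R] (⋀[R]^r₃ P₃)) ≃ₗ[R] ⋀[R]^n P₂}

theorem coe_apply_tmul (hΦ : IsDetIso R P₁ P₂ P₃ r₁ r₃ n hn f g Φ) {u : ⋀[R]^r₁ P₁}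
    {v : ⋀[R]^r₃ P₃} {x : Fin r₁ → P₁} {z : Fin r₃ → P₂}
    (hu : (u : ExteriorAlgebra R P₁) = ιMulti R r₁ x)
    (hv : (v : ExteriorAlgebra R P₃) = ιMulti R r₃ (g ∘ z)) :
    (Φ (u ⊗ₜ v) : ExteriorAlgebra R P₂) = ιMulti R r₁ (f ∘ x) * ιMulti R r₃ z := by
  rw [hΦ x (g ∘ z) z (fun _ => rfl) u v (exteriorPower.ιMulti R n _) hu hv rfl,
    exteriorPower.ιMulti_apply_coe, ιMulti_append_comp_cast]

theorem coe_apply_ιMulti_tmul (hΦ : IsDetIso R P₁ P₂ P₃ r₁ r₃ n hn f g Φ) (x : Fin r₁ → P₁)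
    {y : Fin r₃ → P₃} {z : Fin r₃ → P₂} (hz : g ∘ z = y) :
    (Φ (exteriorPower.ιMulti R r₁ x ⊗ₜ exteriorPower.ιMulti R r₃ y) : ExteriorAlgebra R P₂)
      = ιMulti R r₁ (f ∘ x) * ιMulti R r₃ z := by
  subst hz
  exact hΦ.coe_apply_tmul rfl rfl

end IsDetIso

open ExteriorAlgebra in
theorem stmt_17_general (R : Type*) [CommRing R]
    (A₁ A₂ A₃ B₁ B₂ B₃ C₁ C₂ C₃ : Type*)
    [AddCommGroup A₁] [Module R A₁] [AddCommGroup A₂] [Module R A₂]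
    [AddCommGroup A₃] [Module R A₃] [AddCommGroup B₁] [Module R B₁]
    [AddCommGroup B₂] [Module R B₂] [AddCommGroup B₃] [Module R B₃]
    [AddCommGroup C₁] [Module R C₁] [AddCommGroup C₂] [Module R C₂]
    [AddCommGroup C₃] [Module R C₃]
    (a₁ a₃ c₁ c₃ n : ℕ)
    (hn : n = (a₁ + a₃) + (c₁ + c₃)) (hn' : n = (a₁ + c₁) + (a₃ + c₃))
    -- rows
    (fA : A₁ →ₗ[R] A₂) (gA : A₂ →ₗ[R] A₃) (fB : B₁ →ₗ[R] B₂) (gB : B₂ →ₗ[R] B₃)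
    (fC : C₁ →ₗ[R] C₂) (gC : C₂ →ₗ[R] C₃)
    -- columns
    (α₁ : A₁ →ₗ[R] B₁) (β₁ : B₁ →ₗ[R] C₁) (α₂ : A₂ →ₗ[R] B₂) (β₂ : B₂ →ₗ[R] C₂)
    (α₃ : A₃ →ₗ[R] B₃) (β₃ : B₃ →ₗ[R] C₃)
    -- commutativity of the diagram
    (hcomm₁ : fB ∘ₗ α₁ = α₂ ∘ₗ fA) (hcomm₂ : gB ∘ₗ α₂ = α₃ ∘ₗ gA)
    (hcomm₃ : fC ∘ₗ β₁ = β₂ ∘ₗ fB) (hcomm₄ : gC ∘ₗ β₂ = β₃ ∘ₗ gB)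
    -- exactness of the three rows
    (hexA : Function.Injective fA ∧ LinearMap.range fA = LinearMap.ker gA ∧
      Function.Surjective gA)
    (hexB : Function.Injective fB ∧ LinearMap.range fB = LinearMap.ker gB ∧
      Function.Surjective gB)
    -- exactness of the three columns
    (hex₁ : Function.Injective α₁ ∧ LinearMap.range α₁ = LinearMap.ker β₁ ∧
      Function.Surjective β₁)
    (hex₃ : Function.Injective α₃ ∧ LinearMap.range α₃ = LinearMap.ker β₃ ∧
      Function.Surjective β₃)
    -- the six determinant isomorphisms
    (ΦrA : ((⋀[R]^a₁ A₁) ⊗[R] (⋀[R]^a₃ A₃)) ≃ₗ[R] ⋀[R]^(a₁ + a₃) A₂)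
    (hΦrA : IsDetIso R A₁ A₂ A₃ a₁ a₃ (a₁ + a₃) rfl fA gA ΦrA)
    (ΦrC : ((⋀[R]^c₁ C₁) ⊗[R] (⋀[R]^c₃ C₃)) ≃ₗ[R] ⋀[R]^(c₁ + c₃) C₂)
    (hΦrC : IsDetIso R C₁ C₂ C₃ c₁ c₃ (c₁ + c₃) rfl fC gC ΦrC)
    (Φc₁ : ((⋀[R]^a₁ A₁) ⊗[R] (⋀[R]^c₁ C₁)) ≃ₗ[R] ⋀[R]^(a₁ + c₁) B₁)
    (hΦc₁ : IsDetIso R A₁ B₁ C₁ a₁ c₁ (a₁ + c₁) rfl α₁ β₁ Φc₁)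
    (Φc₃ : ((⋀[R]^a₃ A₃) ⊗[R] (⋀[R]^c₃ C₃)) ≃ₗ[R] ⋀[R]^(a₃ + c₃) B₃)
    (hΦc₃ : IsDetIso R A₃ B₃ C₃ a₃ c₃ (a₃ + c₃) rfl α₃ β₃ Φc₃)
    (Φc₂ : ((⋀[R]^(a₁ + a₃) A₂) ⊗[R] (⋀[R]^(c₁ + c₃) C₂)) ≃ₗ[R] ⋀[R]^n B₂)
    (hΦc₂ : IsDetIso R A₂ B₂ C₂ (a₁ + a₃) (c₁ + c₃) n hn α₂ β₂ Φc₂)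
    (ΦrB : ((⋀[R]^(a₁ + c₁) B₁) ⊗[R] (⋀[R]^(a₃ + c₃) B₃)) ≃ₗ[R] ⋀[R]^n B₂)
    (hΦrB : IsDetIso R B₁ B₂ B₃ (a₁ + c₁) (a₃ + c₃) n hn' fB gB ΦrB) :
    ∀ z : ((⋀[R]^a₁ A₁) ⊗[R] (⋀[R]^c₁ C₁)) ⊗[R] ((⋀[R]^a₃ A₃) ⊗[R] (⋀[R]^c₃ C₃)),
      ΦrB (TensorProduct.congr Φc₁ Φc₃ z)
        = ((-1 : R) ^ (a₃ * c₁)) •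
            Φc₂ (TensorProduct.congr ΦrA ΦrC
              (TensorProduct.tensorTensorTensorComm R
                (⋀[R]^a₁ A₁) (⋀[R]^c₁ C₁) (⋀[R]^a₃ A₃) (⋀[R]^c₃ C₃) z)) := by
  intro z
  suffices h : ΦrB.toLinearMap ∘ₗ (TensorProduct.congr Φc₁ Φc₃).toLinearMap
      = (-1 : R) ^ (a₃ * c₁) • (Φc₂.toLinearMap ∘ₗ (TensorProduct.congr ΦrA ΦrC).toLinearMap ∘ₗ
          (tensorTensorTensorComm R _ _ _ _).toLinearMap) from LinearMap.congr_fun h z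
  refine exteriorPower.ext_fourfold' fun x₁ c a d => ?_
  obtain ⟨y₁, rfl⟩ := hex₁.2.2.comp_left c
  obtain ⟨x₃, rfl⟩ := hexA.2.2.comp_left a
  obtain ⟨y₃, rfl⟩ := (hex₃.2.2.comp hexB.2.2).comp_left d
  simp only [LinearMap.comp_apply, LinearMap.smul_apply, LinearEquiv.coe_coe, congr_tmul,
    tensorTensorTensorComm_tmul]
  have comm₁ : fB ∘ α₁ ∘ x₁ = α₂ ∘ fA ∘ x₁ := funext fun i => LinearMap.congr_fun hcomm₁ (x₁ i)
  have comm₂ : α₃ ∘ gA ∘ x₃ = gB ∘ α₂ ∘ x₃ :=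
    funext fun i => (LinearMap.congr_fun hcomm₂ (x₃ i)).symm
  have comm₃ : fC ∘ β₁ ∘ y₁ = β₂ ∘ fB ∘ y₁ := funext fun i => LinearMap.congr_fun hcomm₃ (y₁ i)
  have comm₄ : gC ∘ β₂ ∘ y₃ = (β₃ ∘ gB) ∘ y₃ := funext fun i => LinearMap.congr_fun hcomm₄ (y₃ i)
  have hc₁ := hΦc₁.coe_apply_ιMulti_tmul x₁ (z := y₁) rfl
  have hc₃ := hΦc₃.coe_apply_ιMulti_tmul (gA ∘ x₃) (y := (β₃ ∘ gB) ∘ y₃) (z := gB ∘ y₃) rfl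
  have hrA := hΦrA.coe_apply_ιMulti_tmul x₁ (z := x₃) rfl
  have hrC := hΦrC.coe_apply_ιMulti_tmul (β₁ ∘ y₁) (z := β₂ ∘ y₃) comm₄
  -- present the four inner outputs as single wedges lifted along `gB` and `β₂`, as `hΦrB` and
  -- `hΦc₂` require
  rw [comm₂, ιMulti_mul_ιMulti, ← Fin.comp_append] at hc₃
  rw [comm₃, ιMulti_mul_ιMulti, ← Fin.comp_append] at hrC
  rw [ιMulti_mul_ιMulti] at hc₁ hrA
  apply Subtype.ext
  rw [Submodule.coe_smul, hΦrB.coe_apply_tmul hc₁ hc₃, hΦc₂.coe_apply_tmul hrA hrC]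
  simp only [Fin.comp_append, ← ιMulti_mul_ιMulti]
  rw [comm₁, ιMulti_mul_mul_mul_comm]

/-- Nine-term compatibility of determinant isomorphisms (Knudsen–Mumford): given a
commutative `3×3` diagram of finite free modules with exact rows `Aᵢ ↪ Bᵢ ↠ Cᵢ`... here
rows `X₁ ↪ X₂ ↠ X₃` (`X ∈ {A,B,C}`) and columns `Aᵢ ↪ Bᵢ ↠ Cᵢ`, the composite
isomorphism `⋀ᵗᵒᵖB₂ ≅ ⋀ᵗᵒᵖA₁ ⊗ ⋀ᵗᵒᵖA₃ ⊗ ⋀ᵗᵒᵖC₁ ⊗ ⋀ᵗᵒᵖC₃` obtained by splitting first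
along the middle column and then along rows A and C agrees, up to the Koszul sign
`(-1)^{rk A₃ · rk C₁}` coming from transposing `⋀ᵗᵒᵖA₃` and `⋀ᵗᵒᵖC₁`, with the one
obtained by splitting first along the middle row B and then along columns 1 and 3. -/
theorem stmt_17 (R : Type*) [CommRing R]
    (A₁ A₂ A₃ B₁ B₂ B₃ C₁ C₂ C₃ : Type*)
    [AddCommGroup A₁] [Module R A₁] [AddCommGroup A₂] [Module R A₂]
    [AddCommGroup A₃] [Module R A₃] [AddCommGroup B₁] [Module R B₁]
    [AddCommGroup B₂] [Module R B₂] [AddCommGroup B₃] [Module R B₃]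
    [AddCommGroup C₁] [Module R C₁] [AddCommGroup C₂] [Module R C₂]
    [AddCommGroup C₃] [Module R C₃]
    [Module.Free R A₁] [Module.Finite R A₁] [Module.Free R A₂] [Module.Finite R A₂]
    [Module.Free R A₃] [Module.Finite R A₃] [Module.Free R B₁] [Module.Finite R B₁]
    [Module.Free R B₂] [Module.Finite R B₂] [Module.Free R B₃] [Module.Finite R B₃]
    [Module.Free R C₁] [Module.Finite R C₁] [Module.Free R C₂] [Module.Finite R C₂]
    [Module.Free R C₃] [Module.Finite R C₃]
    (a₁ a₃ c₁ c₃ n : ℕ)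
    (hA₁ : Module.finrank R A₁ = a₁) (hA₃ : Module.finrank R A₃ = a₃)
    (hC₁ : Module.finrank R C₁ = c₁) (hC₃ : Module.finrank R C₃ = c₃)
    (hn : n = (a₁ + a₃) + (c₁ + c₃)) (hn' : n = (a₁ + c₁) + (a₃ + c₃))
    -- rows
    (fA : A₁ →ₗ[R] A₂) (gA : A₂ →ₗ[R] A₃) (fB : B₁ →ₗ[R] B₂) (gB : B₂ →ₗ[R] B₃)
    (fC : C₁ →ₗ[R] C₂) (gC : C₂ →ₗ[R] C₃)
    -- columns
    (α₁ : A₁ →ₗ[R] B₁) (β₁ : B₁ →ₗ[R] C₁) (α₂ : A₂ →ₗ[R] B₂) (β₂ : B₂ →ₗ[R] C₂)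
    (α₃ : A₃ →ₗ[R] B₃) (β₃ : B₃ →ₗ[R] C₃)
    -- commutativity of the diagram
    (hcomm₁ : fB ∘ₗ α₁ = α₂ ∘ₗ fA) (hcomm₂ : gB ∘ₗ α₂ = α₃ ∘ₗ gA)
    (hcomm₃ : fC ∘ₗ β₁ = β₂ ∘ₗ fB) (hcomm₄ : gC ∘ₗ β₂ = β₃ ∘ₗ gB)
    -- exactness of the three rows
    (hexA : Function.Injective fA ∧ LinearMap.range fA = LinearMap.ker gA ∧
      Function.Surjective gA)
    (hexB : Function.Injective fB ∧ LinearMap.range fB = LinearMap.ker gB ∧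
      Function.Surjective gB)
    (hexC : Function.Injective fC ∧ LinearMap.range fC = LinearMap.ker gC ∧
      Function.Surjective gC)
    -- exactness of the three columns
    (hex₁ : Function.Injective α₁ ∧ LinearMap.range α₁ = LinearMap.ker β₁ ∧
      Function.Surjective β₁)
    (hex₂ : Function.Injective α₂ ∧ LinearMap.range α₂ = LinearMap.ker β₂ ∧
      Function.Surjective β₂)
    (hex₃ : Function.Injective α₃ ∧ LinearMap.range α₃ = LinearMap.ker β₃ ∧
      Function.Surjective β₃)
    -- the six determinant isomorphisms
    (ΦrA : ((⋀[R]^a₁ A₁) ⊗[R] (⋀[R]^a₃ A₃)) ≃ₗ[R] ⋀[R]^(a₁ + a₃) A₂)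
    (hΦrA : IsDetIso R A₁ A₂ A₃ a₁ a₃ (a₁ + a₃) rfl fA gA ΦrA)
    (ΦrC : ((⋀[R]^c₁ C₁) ⊗[R] (⋀[R]^c₃ C₃)) ≃ₗ[R] ⋀[R]^(c₁ + c₃) C₂)
    (hΦrC : IsDetIso R C₁ C₂ C₃ c₁ c₃ (c₁ + c₃) rfl fC gC ΦrC)
    (Φc₁ : ((⋀[R]^a₁ A₁) ⊗[R] (⋀[R]^c₁ C₁)) ≃ₗ[R] ⋀[R]^(a₁ + c₁) B₁)
    (hΦc₁ : IsDetIso R A₁ B₁ C₁ a₁ c₁ (a₁ + c₁) rfl α₁ β₁ Φc₁)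
    (Φc₃ : ((⋀[R]^a₃ A₃) ⊗[R] (⋀[R]^c₃ C₃)) ≃ₗ[R] ⋀[R]^(a₃ + c₃) B₃)
    (hΦc₃ : IsDetIso R A₃ B₃ C₃ a₃ c₃ (a₃ + c₃) rfl α₃ β₃ Φc₃)
    (Φc₂ : ((⋀[R]^(a₁ + a₃) A₂) ⊗[R] (⋀[R]^(c₁ + c₃) C₂)) ≃ₗ[R] ⋀[R]^n B₂)
    (hΦc₂ : IsDetIso R A₂ B₂ C₂ (a₁ + a₃) (c₁ + c₃) n hn α₂ β₂ Φc₂)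
    (ΦrB : ((⋀[R]^(a₁ + c₁) B₁) ⊗[R] (⋀[R]^(a₃ + c₃) B₃)) ≃ₗ[R] ⋀[R]^n B₂)
    (hΦrB : IsDetIso R B₁ B₂ B₃ (a₁ + c₁) (a₃ + c₃) n hn' fB gB ΦrB) :
    ∀ z : ((⋀[R]^a₁ A₁) ⊗[R] (⋀[R]^c₁ C₁)) ⊗[R] ((⋀[R]^a₃ A₃) ⊗[R] (⋀[R]^c₃ C₃)),
      ΦrB (TensorProduct.congr Φc₁ Φc₃ z)
        = ((-1 : R) ^ (a₃ * c₁)) •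
            Φc₂ (TensorProduct.congr ΦrA ΦrC
              (TensorProduct.tensorTensorTensorComm R
                (⋀[R]^a₁ A₁) (⋀[R]^c₁ C₁) (⋀[R]^a₃ A₃) (⋀[R]^c₃ C₃) z)) :=
  stmt_17_general R A₁ A₂ A₃ B₁ B₂ B₃ C₁ C₂ C₃ a₁ a₃ c₁ c₃ n hn hn' fA gA fB gB fC gC α₁ β₁ α₂ β₂ α₃
    β₃ hcomm₁ hcomm₂ hcomm₃ hcomm₄ hexA hexB hex₁ hex₃ ΦrA hΦrA ΦrC hΦrC Φc₁ hΦc₁ Φc₃ hΦc₃ Φc₂ hΦc₂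
    ΦrB hΦrB
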